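/- For every n ∈ ℕ there exists a unitary operator U_n^{(d)} on the Hilbert space ℓ²(ℤ^d; H) of square-summable H-valued functions on ℤ^d such that (U_n^{(d)} W)(x) = ∑_{ε ∈ Λ^d} C_n^{(ε)} W(x − ε) for all x ∈ ℤ^d and all W ∈ ℓ²(ℤ^d; H). -/

import Mathlib

/- Common setup: quantum Bernoulli noises on `ℋ = ℓ²(Γ)`, `Γ` = finite subsets of `ℕ`. -/

noncomputable section

open ContinuousLinearMap Filter

/-- The space `ℋ = ℓ²(Γ)` of square-integrable Bernoulli functionals,
where `Γ` is the set of finite subsets of `ℕ`. -/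
abbrev ℋ : Type := lp (fun _ : Finset ℕ => ℂ) 2

/-- The canonical orthonormal basis `{Z_σ : σ ∈ Γ}` of `ℋ`. -/
def Z (σ : Finset ℕ) : ℋ := lp.single 2 σ 1

/-- `QBN a` says that `a k` is the annihilation operator `∂_k` acting on Bernoulli
functionals: `∂_k Z_σ = 1_σ(k) Z_{σ\k}` and `∂_k* Z_σ = (1 - 1_σ(k)) Z_{σ∪k}`. -/
def QBN (a : ℕ → ℋ →L[ℂ] ℋ) : Prop :=
  (∀ (k : ℕ) (σ : Finset ℕ), a k (Z σ) = if k ∈ σ then Z (σ.erase k) else 0) ∧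
  (∀ (k : ℕ) (σ : Finset ℕ), adjoint (a k) (Z σ) = if k ∈ σ then 0 else Z (insert k σ))

/-- `L_n = (∂_n* + ∂_n - I)/2`. -/
def Lop (a : ℕ → ℋ →L[ℂ] ℋ) (n : ℕ) : ℋ →L[ℂ] ℋ := (2 : ℂ)⁻¹ • (adjoint (a n) + a n - 1)

/-- `R_n = (∂_n* + ∂_n + I)/2`. -/
def Rop (a : ℕ → ℋ →L[ℂ] ℋ) (n : ℕ) : ℋ →L[ℂ] ℋ := (2 : ℂ)⁻¹ • (adjoint (a n) + a n + 1)

/-- `Λ = {-1, 1} ⊆ ℤ`. -/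
def Lam : Finset ℤ := {-1, 1}

/-- `Λ^d`, as a finite set of vectors in `ℤ^d`. -/
def LamD (d : ℕ) : Finset (Fin d → ℤ) := Fintype.piFinset fun _ => Lam

/-- `B_n^{(ε)}`: equals `L_n` if `ε = -1` and `R_n` if `ε = +1`. -/
def Bop (a : ℕ → ℋ →L[ℂ] ℋ) (n : ℕ) (e : ℤ) : ℋ →L[ℂ] ℋ :=
  if e = -1 then Lop a n else Rop a n

/-- A characterization of the `d`-fold Hilbert-space tensor power of `Hs`:
`tpv` is the multilinear map `(u_1, …, u_d) ↦ u_1 ⊗ ⋯ ⊗ u_d`, which satisfies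
`⟪⊗u_j, ⊗v_j⟫ = ∏ ⟪u_j, v_j⟫` and has dense span, and `tp` sends a `d`-tuple of bounded
operators to their tensor product operator, i.e. `(⊗A_j)(⊗u_j) = ⊗(A_j u_j)`. -/
def IsTensorD {Hs : Type} [NormedAddCommGroup Hs] [InnerProductSpace ℂ Hs]
    {d : ℕ} {Hd : Type} [NormedAddCommGroup Hd] [InnerProductSpace ℂ Hd]
    (tpv : MultilinearMap ℂ (fun _ : Fin d => Hs) Hd)
    (tp : (Fin d → Hs →L[ℂ] Hs) → (Hd →L[ℂ] Hd)) : Prop :=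
  (∀ u v : Fin d → Hs, (@inner ℂ _ _ (tpv u) (tpv v)) = ∏ j, (@inner ℂ _ _ (u j) (v j))) ∧
  ((Submodule.span ℂ (Set.range fun u => tpv u)).topologicalClosure = ⊤) ∧
  (∀ (A : Fin d → Hs →L[ℂ] Hs) (u : Fin d → Hs), tp A (tpv u) = tpv fun j => A j (u j))

/-- Conjugation of an operator by a unitary isomorphism `K`: `T ↦ K T K⁻¹`. -/
def conjK {Hs Hd : Type} [NormedAddCommGroup Hs] [InnerProductSpace ℂ Hs]
    [NormedAddCommGroup Hd] [InnerProductSpace ℂ Hd]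
    (K : Hd ≃ₗᵢ[ℂ] Hs) (T : Hd →L[ℂ] Hd) : Hs →L[ℂ] Hs :=
  K.toLinearIsometry.toContinuousLinearMap ∘L T ∘L K.symm.toLinearIsometry.toContinuousLinearMap

/-- `C_n^{(ε)} = K (B_n^{(ε_1)} ⊗ ⋯ ⊗ B_n^{(ε_d)}) K⁻¹` for `ε ∈ Λ^d`. -/
def Cop {d : ℕ} {Hd : Type} [NormedAddCommGroup Hd] [InnerProductSpace ℂ Hd]
    (a : ℕ → ℋ →L[ℂ] ℋ) (tp : (Fin d → ℋ →L[ℂ] ℋ) → (Hd →L[ℂ] Hd))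
    (K : Hd ≃ₗᵢ[ℂ] ℋ) (n : ℕ) (v : Fin d → ℤ) : ℋ →L[ℂ] ℋ :=
  conjK K (tp fun j => Bop a n (v j))

/-- The trace of an operator computed relative to an orthonormal basis `b`:
`Tr T = ∑_i Re ⟪b i, T (b i)⟫` (for positive operators this is the genuine trace). -/
def trB {E : Type} [NormedAddCommGroup E] [InnerProductSpace ℂ E] {ι : Type}
    (b : ι → E) (T : E →L[ℂ] E) : ℝ :=
  ∑' i, (@inner ℂ _ _ (b i) (T (b i))).re

/-- Finiteness (summability) of the trace of `T` relative to the orthonormal basis `b`;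
for a positive operator `T` this says exactly that `T` is of trace class. -/
def HasFiniteTrace {E : Type} [NormedAddCommGroup E] [InnerProductSpace ℂ E] {ι : Type}
    (b : ι → E) (T : E →L[ℂ] E) : Prop :=
  Summable fun i => (@inner ℂ _ _ (b i) (T (b i))).re

/-- The trace on `ℋ`, computed in the canonical ONB `{Z_σ}`. -/
def trH : (ℋ →L[ℂ] ℋ) → ℝ := trB Z

/-- A nucleus with site space `X` on a Hilbert space with orthonormal basis `b`: a family of
positive trace-class operators `ω x` with `∑_x Tr[ω x] = 1`. -/
def IsNucleusOn {E : Type} [NormedAddCommGroup E] [InnerProductSpace ℂ E] [CompleteSpace E]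
    {ι X : Type} (b : ι → E) (ω : X → E →L[ℂ] E) : Prop :=
  (∀ x, (ω x).IsPositive) ∧ (∀ x, HasFiniteTrace b (ω x)) ∧ HasSum (fun x => trB b (ω x)) 1

/-- The one-dimensional map `𝔍_n`: `(𝔍_n ρ)(x) = L_n ρ(x+1) L_n + R_n ρ(x-1) R_n`. -/
def Jmap1 (a : ℕ → ℋ →L[ℂ] ℋ) (n : ℕ) (ρ : ℤ → ℋ →L[ℂ] ℋ) : ℤ → ℋ →L[ℂ] ℋ :=
  fun x => Lop a n * ρ (x + 1) * Lop a n + Rop a n * ρ (x - 1) * Rop a n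

/-- The `d`-dimensional map `𝔍_n^{(d)}`:
`(𝔍_n^{(d)} ω)(x) = ∑_{ε ∈ Λ^d} C_n^{(ε)} ω(x-ε) C_n^{(ε)}`. -/
def JmapD {d : ℕ} {Hd : Type} [NormedAddCommGroup Hd] [InnerProductSpace ℂ Hd]
    (a : ℕ → ℋ →L[ℂ] ℋ) (tp : (Fin d → ℋ →L[ℂ] ℋ) → (Hd →L[ℂ] Hd)) (K : Hd ≃ₗᵢ[ℂ] ℋ)
    (n : ℕ) (ω : (Fin d → ℤ) → ℋ →L[ℂ] ℋ) : (Fin d → ℤ) → ℋ →L[ℂ] ℋ :=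
  fun x => ∑ v ∈ LamD d, Cop a tp K n v * ω (x - v) * Cop a tp K n v

/-- The sequence `ρ⁽⁰⁾ = ρ`, `ρ⁽ⁿ⁺¹⁾ = 𝔍_n ρ⁽ⁿ⁾` generated by `ρ` and `(𝔍_n)`. -/
def seqJ (a : ℕ → ℋ →L[ℂ] ℋ) (ρ : ℤ → ℋ →L[ℂ] ℋ) : ℕ → ℤ → ℋ →L[ℂ] ℋ
  | 0 => ρ
  | n + 1 => Jmap1 a n (seqJ a ρ n)

/-- Regularity of a 1-dimensional nucleus `ρ`:
`lim_n ∑_x e^{itx/√n} Tr[ρ⁽ⁿ⁾(x)] = e^{-t²/2}` for every real `t`. -/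
def Regular (a : ℕ → ℋ →L[ℂ] ℋ) (ρ : ℤ → ℋ →L[ℂ] ℋ) : Prop :=
  ∀ t : ℝ, Tendsto (fun n : ℕ => ∑' x : ℤ,
      Complex.exp (Complex.I * (t : ℂ) * (x : ℂ) / (Real.sqrt n : ℂ)) * (trH (seqJ a ρ n x) : ℂ))
    atTop (nhds (Complex.exp (-(t : ℂ) ^ 2 / 2)))

/-- The rank-one (Dirac) operator `|u⟩⟨v| : w ↦ ⟪v, w⟫ u`. -/
def dyad {E : Type} [NormedAddCommGroup E] [InnerProductSpace ℂ E] (u v : E) : E →L[ℂ] E :=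
  (toSpanSingleton ℂ u).comp (innerSL ℂ v)

/-- `ℓ²(ℤ^d)`. -/
abbrev l2Z (d : ℕ) : Type := lp (fun _ : Fin d → ℤ => ℂ) 2

/-- The canonical orthonormal basis `{δ_x : x ∈ ℤ^d}` of `ℓ²(ℤ^d)`. -/
def deltaV {d : ℕ} (x : Fin d → ℤ) : l2Z d := lp.single 2 x 1

/-- A characterization of the Hilbert-space tensor product `E = ℓ²(ℤ^d) ⊗ Hs`:
`tv` is the bilinear map `(f, u) ↦ f ⊗ u`, with `⟪f⊗u, g⊗v⟫ = ⟪f,g⟫⟪u,v⟫` and dense span,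
and `top2` sends a pair of bounded operators to their tensor product operator:
`(A ⊗ B)(f ⊗ u) = (A f) ⊗ (B u)`. -/
def IsTensor2 {d : ℕ} {Hs E : Type} [NormedAddCommGroup Hs] [InnerProductSpace ℂ Hs]
    [NormedAddCommGroup E] [InnerProductSpace ℂ E]
    (tv : l2Z d →ₗ[ℂ] Hs →ₗ[ℂ] E)
    (top2 : (l2Z d →L[ℂ] l2Z d) → (Hs →L[ℂ] Hs) → (E →L[ℂ] E)) : Prop :=
  (∀ (f g : l2Z d) (u v : Hs),
      (@inner ℂ _ _ (tv f u) (tv g v)) = (@inner ℂ _ _ f g) * (@inner ℂ _ _ u v)) ∧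
  ((Submodule.span ℂ {z : E | ∃ f u, z = tv f u}).topologicalClosure = ⊤) ∧
  (∀ (A : l2Z d →L[ℂ] l2Z d) (B : Hs →L[ℂ] Hs) (f : l2Z d) (u : Hs),
      top2 A B (tv f u) = tv (A f) (B u))

/-- The orthonormal basis `{δ_x ⊗ b_κ}` of the tensor product `ℓ²(ℤ^d) ⊗ Hs` induced by the
canonical basis of `ℓ²(ℤ^d)` and an orthonormal basis `b` of `Hs`. -/
def tbasis {d : ℕ} {Hs E : Type} [NormedAddCommGroup Hs] [InnerProductSpace ℂ Hs]
    [NormedAddCommGroup E] [InnerProductSpace ℂ E]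
    (tv : l2Z d →ₗ[ℂ] Hs →ₗ[ℂ] E) {κ : Type} (b : κ → Hs) : (Fin d → ℤ) × κ → E :=
  fun p => tv (deltaV p.1) (b p.2)

/-- The Kraus operators `M^{(n)}_{x,y} = |δ_x⟩⟨δ_y| ⊗ C_n^{(x-y)}` if `x - y ∈ Λ^d`, else `0`. -/
def Mop {d : ℕ} {Hd E : Type} [NormedAddCommGroup Hd] [InnerProductSpace ℂ Hd]
    [NormedAddCommGroup E] [InnerProductSpace ℂ E]
    (a : ℕ → ℋ →L[ℂ] ℋ) (tp : (Fin d → ℋ →L[ℂ] ℋ) → (Hd →L[ℂ] Hd)) (K : Hd ≃ₗᵢ[ℂ] ℋ)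
    (top2 : (l2Z d →L[ℂ] l2Z d) → (ℋ →L[ℂ] ℋ) → (E →L[ℂ] E))
    (n : ℕ) (x y : Fin d → ℤ) : E →L[ℂ] E :=
  if x - y ∈ LamD d then top2 (dyad (deltaV x) (deltaV y)) (Cop a tp K n (x - y)) else 0

/-- The 1-dimensional nucleus `ρ_σ` concentrated at `0` with value `|Z_σ⟩⟨Z_σ|`. -/
def rhoPoint (σ : Finset ℕ) : ℤ → ℋ →L[ℂ] ℋ := fun x => if x = 0 then dyad (Z σ) (Z σ) else 0

/-- `ℓ²(ℤ^d; ℋ)`, the space of square-summable `ℋ`-valued functions on `ℤ^d`. -/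
abbrev l2ZH (d : ℕ) : Type := lp (fun _ : Fin d → ℤ => ℋ) 2

/-!
`S = ∂_n* + ∂_n` is a self-adjoint involution, so `R_n = (S + 1)/2` is a self-adjoint projection
and `L_n = R_n - 1`; hence `L_n R_n = R_n L_n = 0` and `L_n² + R_n² = 1`. Tensor products and
conjugation by `K` respect products, sums and adjoints, so the coins `C_ε` are self-adjoint with
`C_ε C_η = 0` for `ε ≠ η` and `∑_ε C_ε² = 1`. For any such finite family on a group, the walk
`W ↦ ∑_ε C_ε W(· - ε)` preserves inner products (translations are unitary and the cross terms
vanish), and `W ↦ ∑_ε C_ε W(· + ε)` is a right inverse of it.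
-/

open scoped ENNReal InnerProductSpace

theorem Memℓp.comp_equiv {α β E : Type*} [NormedAddCommGroup E] {p : ℝ≥0∞} {f : α → E}
    (hf : Memℓp f p) (e : β ≃ α) : Memℓp (f ∘ e) p := by
  obtain rfl | rfl | hp := p.trichotomy
  · rw [memℓp_zero_iff] at hf ⊢
    exact hf.preimage e.injective.injOn
  · rw [memℓp_infty_iff] at hf ⊢
    exact hf.mono (Set.range_comp_subset_range e fun a => ‖f a‖)
  · rw [memℓp_gen_iff hp] at hf ⊢
    exact e.summable_iff.mpr hf

theorem Memℓp.clm_comp {α 𝕜 E F : Type*} [NontriviallyNormedField 𝕜] [NormedAddCommGroup E]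
    [NormedSpace 𝕜 E] [NormedAddCommGroup F] [NormedSpace 𝕜 F] {p : ℝ≥0∞} {f : α → E}
    (hf : Memℓp f p) (A : E →L[𝕜] F) : Memℓp (fun i => A (f i)) p :=
  (hf.norm.const_mul ‖A‖).mono fun i => A.le_opNorm (f i)

namespace lp

variable {G 𝕜 E : Type*} [NontriviallyNormedField 𝕜] [NormedAddCommGroup E] [NormedSpace 𝕜 E]
  {p : ℝ≥0∞}

def clmComp (A : E →L[𝕜] E) : lp (fun _ : G => E) p →ₗ[𝕜] lp (fun _ : G => E) p where
  toFun W := ⟨fun x => A (W x), (lp.memℓp W).clm_comp A⟩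
  map_add' W W' := lp.ext <| funext fun x => map_add A (W x) (W' x)
  map_smul' c W := lp.ext <| funext fun x => A.map_smul c (W x)

@[simp]
theorem clmComp_apply (A : E →L[𝕜] E) (W : lp (fun _ : G => E) p) (x : G) :
    clmComp A W x = A (W x) := rfl

variable [AddGroup G]

variable (𝕜) in
def translate (g : G) : lp (fun _ : G => E) p →ₗ[𝕜] lp (fun _ : G => E) p where
  toFun W := ⟨fun x => W (x - g), (lp.memℓp W).comp_equiv (Equiv.subRight g)⟩
  map_add' _ _ := rfl
  map_smul' _ _ := rfl

@[simp]
theorem translate_apply (g : G) (W : lp (fun _ : G => E) p) (x : G) :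
    translate 𝕜 g W x = W (x - g) := rfl

end lp

section OpConv

variable {G 𝕜 E : Type*} [AddGroup G]

section Normed

variable [NontriviallyNormedField 𝕜] [NormedAddCommGroup E] [NormedSpace 𝕜 E] {p : ℝ≥0∞}

def opConv (s : Finset G) (C : G → E →L[𝕜] E) :
    lp (fun _ : G => E) p →ₗ[𝕜] lp (fun _ : G => E) p :=
  ∑ v ∈ s, lp.translate 𝕜 v ∘ₗ lp.clmComp (C v)

theorem opConv_apply (s : Finset G) (C : G → E →L[𝕜] E) (W : lp (fun _ : G => E) p) (x : G) :
    opConv s C W x = ∑ v ∈ s, C v (W (x - v)) := by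
  simp only [opConv, LinearMap.coe_sum, Finset.sum_apply, lp.coeFn_sum, LinearMap.comp_apply,
    lp.translate_apply, lp.clmComp_apply]

theorem opConv_surjective {s : Finset G} {C : G → E →L[𝕜] E}
    (hmul : ∀ v ∈ s, ∀ w ∈ s, v ≠ w → C v * C w = 0) (hsq : ∑ v ∈ s, C v * C v = 1) :
    Function.Surjective (opConv (p := p) s C) := by
  intro W
  set V := ∑ w ∈ s, lp.clmComp (C w) (lp.translate 𝕜 (-w) W)
  have hV : ∀ y, V y = ∑ w ∈ s, C w (W (y - -w)) := fun y => by
    simp only [V, lp.coeFn_sum, Finset.sum_apply, lp.clmComp_apply, lp.translate_apply]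
  refine ⟨V, lp.ext <| funext fun x => ?_⟩
  have hdiag : ∀ v ∈ s, ∑ w ∈ s, C v (C w (W (x - v - -w))) = (C v * C v) (W x) := fun v hv => by
    rw [Finset.sum_eq_single_of_mem v hv fun w hw hwv => by
      rw [← mul_apply_eq_comp, hmul v hv w hw hwv.symm, zero_apply]]
    simp
  simp only [opConv_apply, hV, map_sum]
  rw [Finset.sum_congr rfl hdiag, ← sum_apply, hsq, one_apply_eq_self]

end Normed

section Hilbert

variable [RCLike 𝕜] [NormedAddCommGroup E] [InnerProductSpace 𝕜 E]

theorem lp.inner_translate (g : G) (W W' : lp (fun _ : G => E) 2) :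
    ⟪lp.translate 𝕜 g W, lp.translate 𝕜 g W'⟫_𝕜 = ⟪W, W'⟫_𝕜 := by
  simp only [lp.inner_eq_tsum, lp.translate_apply]
  exact (Equiv.subRight g).tsum_eq fun y => ⟪W y, W' y⟫_𝕜

theorem inner_opConv_opConv [CompleteSpace E] {s : Finset G} {C : G → E →L[𝕜] E}
    (hsa : ∀ v ∈ s, IsSelfAdjoint (C v)) (hmul : ∀ v ∈ s, ∀ w ∈ s, v ≠ w → C v * C w = 0)
    (hsq : ∑ v ∈ s, C v * C v = 1) (W W' : lp (fun _ : G => E) 2) :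
    ⟪opConv s C W, opConv s C W'⟫_𝕜 = ⟪W, W'⟫_𝕜 := by
  have hC : ∀ v ∈ s, ∀ w (a b : E), ⟪C v a, C w b⟫_𝕜 = ⟪a, (C v * C w) b⟫_𝕜 :=
    fun v hv w a b => (hsa v hv).isSymmetric a (C w b)
  set T : G → lp (fun _ : G => E) 2 →ₗ[𝕜] lp (fun _ : G => E) 2 :=
    fun v => lp.translate 𝕜 v ∘ₗ lp.clmComp (C v)
  have hoff : ∀ v ∈ s, ∀ w ∈ s, v ≠ w → ⟪T v W, T w W'⟫_𝕜 = 0 := fun v hv w hw hvw => by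
    simp [T, lp.inner_eq_tsum, hC v hv, hmul v hv w hw hvw]
  calc ⟪opConv s C W, opConv s C W'⟫_𝕜 = ∑ v ∈ s, ⟪T v W, T v W'⟫_𝕜 := by
        simp only [opConv, LinearMap.coe_sum, Finset.sum_apply, sum_inner, inner_sum]
        exact Finset.sum_congr rfl fun v hv =>
          Finset.sum_eq_single_of_mem v hv fun w hw hwv => hoff w hw v hv hwv
    _ = ∑ v ∈ s, ∑' y, ⟪lp.clmComp (C v) W y, lp.clmComp (C v) W' y⟫_𝕜 := by
        refine Finset.sum_congr rfl fun v _ => ?_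
        simp only [T, LinearMap.comp_apply]
        rw [lp.inner_translate, lp.inner_eq_tsum]
    _ = ∑' y, ⟪W y, W' y⟫_𝕜 := by
        rw [← Summable.tsum_finsetSum fun v _ => lp.summable_inner _ _]
        refine tsum_congr fun y => ?_
        simp only [lp.clmComp_apply]
        rw [Finset.sum_congr rfl fun v hv => hC v hv v (W y) (W' y), ← inner_sum, ← sum_apply, hsq,
          one_apply_eq_self]
    _ = ⟪W, W'⟫_𝕜 := (lp.inner_eq_tsum W W').symm

theorem exists_linearIsometryEquiv_eq_opConv [CompleteSpace E] {s : Finset G}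
    {C : G → E →L[𝕜] E} (hsa : ∀ v ∈ s, IsSelfAdjoint (C v))
    (hmul : ∀ v ∈ s, ∀ w ∈ s, v ≠ w → C v * C w = 0) (hsq : ∑ v ∈ s, C v * C v = 1) :
    ∃ U : lp (fun _ : G => E) 2 ≃ₗᵢ[𝕜] lp (fun _ : G => E) 2, ⇑U = opConv s C :=
  ⟨.ofSurjective ⟨opConv s C, (LinearMap.norm_map_iff_inner_map_map _).mpr
    (inner_opConv_opConv hsa hmul hsq)⟩ (opConv_surjective hmul hsq), rfl⟩

end Hilbert

end OpConv

theorem isIdempotentElem_half_smul_add_one {R A : Type*} [Field R] [NeZero (2 : R)] [Ring A]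
    [Algebra R A] {S : A} (hS : S * S = 1) : IsIdempotentElem ((2 : R)⁻¹ • (S + 1)) := by
  have hsq : (S + 1) * (S + 1) = (2 : R) • (S + 1) := by
    rw [two_smul]
    calc (S + 1) * (S + 1) = S * S + S + S + 1 := by noncomm_ring
      _ = S + 1 + (S + 1) := by rw [hS]; abel
  rw [IsIdempotentElem, smul_mul_smul_comm, hsq, smul_smul]
  congr 1
  field_simp

theorem ext_Z {T T' : ℋ →L[ℂ] ℋ} (h : ∀ σ, T (Z σ) = T' (Z σ)) : T = T' :=
  lp.ext_continuousLinearMap (by norm_num) fun σ => ContinuousLinearMap.ext_ring (h σ)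

namespace QBN

variable {a : ℕ → ℋ →L[ℂ] ℋ}

theorem adjoint_add_mul_self_eq_one (ha : QBN a) (n : ℕ) :
    (adjoint (a n) + a n) * (adjoint (a n) + a n) = 1 := by
  have hS : ∀ σ, (adjoint (a n) + a n) (Z σ) = if n ∈ σ then Z (σ.erase n) else Z (insert n σ) :=
    fun σ => by by_cases h : n ∈ σ <;> simp [ha.1, ha.2, h]
  refine ext_Z fun σ => ?_
  by_cases h : n ∈ σ <;> simp [hS, h, Finset.insert_erase]

theorem isIdempotentElem_Rop (ha : QBN a) (n : ℕ) : IsIdempotentElem (Rop a n) :=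
  isIdempotentElem_half_smul_add_one (ha.adjoint_add_mul_self_eq_one n)

end QBN

section Bop

variable (a : ℕ → ℋ →L[ℂ] ℋ) (n : ℕ)

theorem Lop_eq_Rop_sub_one : Lop a n = Rop a n - 1 := by
  rw [Lop, Rop]
  module

theorem isSelfAdjoint_Rop : IsSelfAdjoint (Rop a n) := by
  simp [IsSelfAdjoint, Rop, star_eq_adjoint, add_comm]

theorem isSelfAdjoint_Bop (e : ℤ) : IsSelfAdjoint (Bop a n e) := by
  have hR := isSelfAdjoint_Rop a n
  unfold Bop
  split_ifs
  · rw [Lop_eq_Rop_sub_one]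
    exact hR.sub (.one _)
  · exact hR

variable {a n}

theorem Bop_mul_Bop_of_ne (ha : QBN a) {e e' : ℤ} (he : e ∈ Lam) (he' : e' ∈ Lam) (hne : e ≠ e') :
    Bop a n e * Bop a n e' = 0 := by
  have hP := ha.isIdempotentElem_Rop n
  have hLR : (Rop a n - 1) * Rop a n = 0 := by rw [sub_mul, hP.eq, one_mul, sub_self]
  have hRL : Rop a n * (Rop a n - 1) = 0 := by rw [mul_sub, hP.eq, mul_one, sub_self]
  simp only [Lam, Finset.mem_insert, Finset.mem_singleton] at he he'
  rcases he with rfl | rfl <;> rcases he' with rfl | rfl <;>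
    simp_all [Bop, Lop_eq_Rop_sub_one]

theorem sum_Bop_mul_self (ha : QBN a) : ∑ e ∈ Lam, Bop a n e * Bop a n e = 1 := by
  have hP := ha.isIdempotentElem_Rop n
  calc ∑ e ∈ Lam, Bop a n e * Bop a n e = (Rop a n - 1) * (Rop a n - 1) + Rop a n * Rop a n := by
        simp [Lam, Bop, Lop_eq_Rop_sub_one]
    _ = Rop a n * Rop a n - Rop a n - Rop a n + 1 + Rop a n * Rop a n := by noncomm_ring
    _ = 1 := by rw [hP.eq]; abel

end Bop

namespace IsTensorD

variable {Hs Hd : Type} [NormedAddCommGroup Hs] [InnerProductSpace ℂ Hs] [NormedAddCommGroup Hd]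
  [InnerProductSpace ℂ Hd] {d : ℕ} {tpv : MultilinearMap ℂ (fun _ : Fin d => Hs) Hd}
  {tp : (Fin d → Hs →L[ℂ] Hs) → (Hd →L[ℂ] Hd)}

theorem ext {F : Type*} [AddCommMonoid F] [Module ℂ F] [TopologicalSpace F] [T2Space F]
    (htp : IsTensorD tpv tp) {T T' : Hd →L[ℂ] F} (h : ∀ u, T (tpv u) = T' (tpv u)) : T = T' :=
  ContinuousLinearMap.ext_on (Submodule.dense_iff_topologicalClosure_eq_top.mpr htp.2.1)
    (by rintro _ ⟨u, rfl⟩; exact h u)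

theorem tp_mul (htp : IsTensorD tpv tp) (A B : Fin d → Hs →L[ℂ] Hs) :
    tp A * tp B = tp fun j => A j * B j :=
  htp.ext fun u => by simp only [mul_apply_eq_comp, htp.2.2]

theorem tp_one (htp : IsTensorD tpv tp) : tp (fun _ => 1) = 1 :=
  htp.ext fun u => by simp only [htp.2.2, one_apply_eq_self]

theorem tp_eq_zero (htp : IsTensorD tpv tp) {A : Fin d → Hs →L[ℂ] Hs} (j : Fin d)
    (hj : A j = 0) : tp A = 0 :=
  htp.ext fun u => by
    rw [htp.2.2, zero_apply]
    exact tpv.map_coord_zero j (by rw [hj, zero_apply])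

theorem sum_piFinset_tp (htp : IsTensorD tpv tp) {ι : Type*} [DecidableEq ι]
    (t : Fin d → Finset ι) (F : Fin d → ι → Hs →L[ℂ] Hs) :
    ∑ v ∈ Fintype.piFinset t, tp (fun j => F j (v j)) = tp fun j => ∑ e ∈ t j, F j e :=
  htp.ext fun u => by
    simp only [sum_apply, htp.2.2, MultilinearMap.map_sum_finset]

theorem adjoint_tp [CompleteSpace Hs] [CompleteSpace Hd] (htp : IsTensorD tpv tp)
    (A : Fin d → Hs →L[ℂ] Hs) : adjoint (tp A) = tp fun j => adjoint (A j) := by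
  refine htp.ext fun u => ext_inner_right ℂ fun w => ?_
  suffices innerSL ℂ (adjoint (tp A) (tpv u)) = innerSL ℂ (tpv fun j => adjoint (A j) (u j)) by
    rw [htp.2.2]
    exact congr($this w)
  refine htp.ext fun v => ?_
  simp only [innerSL_apply_apply, adjoint_inner_left, htp.2.2, htp.1]

end IsTensorD

section Coins

variable {a : ℕ → ℋ →L[ℂ] ℋ} {d : ℕ} {Hd : Type} [NormedAddCommGroup Hd] [InnerProductSpace ℂ Hd]
  [CompleteSpace Hd] {tpv : MultilinearMap ℂ (fun _ : Fin d => ℋ) Hd}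
  {tp : (Fin d → ℋ →L[ℂ] ℋ) → (Hd →L[ℂ] Hd)} (K : Hd ≃ₗᵢ[ℂ] ℋ) (n : ℕ)

theorem Cop_eq_conjStarAlgEquiv (v : Fin d → ℤ) :
    Cop a tp K n v = K.conjStarAlgEquiv (tp fun j => Bop a n (v j)) :=
  rfl

theorem isSelfAdjoint_Cop (htp : IsTensorD tpv tp) (v : Fin d → ℤ) :
    IsSelfAdjoint (Cop a tp K n v) := by
  rw [Cop_eq_conjStarAlgEquiv]
  refine IsSelfAdjoint.map ?_ _
  rw [IsSelfAdjoint, star_eq_adjoint, htp.adjoint_tp]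
  simp_rw [← star_eq_adjoint, (isSelfAdjoint_Bop a n _).star_eq]

theorem Cop_mul_Cop_of_ne (htp : IsTensorD tpv tp) (ha : QBN a) {v w : Fin d → ℤ}
    (hv : v ∈ LamD d) (hw : w ∈ LamD d) (hvw : v ≠ w) :
    Cop a tp K n v * Cop a tp K n w = 0 := by
  obtain ⟨j, hj⟩ := Function.ne_iff.mp hvw
  rw [Cop_eq_conjStarAlgEquiv, Cop_eq_conjStarAlgEquiv, ← map_mul, htp.tp_mul,
    htp.tp_eq_zero j (Bop_mul_Bop_of_ne ha (Fintype.mem_piFinset.mp hv j)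
      (Fintype.mem_piFinset.mp hw j) hj), map_zero]

theorem sum_Cop_mul_self (htp : IsTensorD tpv tp) (ha : QBN a) :
    ∑ v ∈ LamD d, Cop a tp K n v * Cop a tp K n v = 1 := by
  simp only [Cop_eq_conjStarAlgEquiv, ← map_mul, ← map_sum, htp.tp_mul]
  rw [LamD, htp.sum_piFinset_tp _ fun _ e => Bop a n e * Bop a n e]
  simp only [sum_Bop_mul_self ha, htp.tp_one, map_one]

end Coins

theorem stmt18_general (a : ℕ → ℋ →L[ℂ] ℋ) (ha : QBN a)
    (d : ℕ)
    (Hd : Type) [NormedAddCommGroup Hd] [InnerProductSpace ℂ Hd] [CompleteSpace Hd]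
    (tpv : MultilinearMap ℂ (fun _ : Fin d => ℋ) Hd)
    (tp : (Fin d → ℋ →L[ℂ] ℋ) → (Hd →L[ℂ] Hd))
    (htp : IsTensorD tpv tp)
    (K : Hd ≃ₗᵢ[ℂ] ℋ) (n : ℕ) :
    ∃ U : l2ZH d ≃ₗᵢ[ℂ] l2ZH d, ∀ (W : l2ZH d) (x : Fin d → ℤ),
      (U W) x = ∑ v ∈ LamD d, Cop a tp K n v (W (x - v)) := by
  obtain ⟨U, hU⟩ := exists_linearIsometryEquiv_eq_opConv
    (fun v _ => isSelfAdjoint_Cop K n htp v) (fun v hv w hw => Cop_mul_Cop_of_ne K n htp ha hv hw)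
    (sum_Cop_mul_self K n htp ha)
  exact ⟨U, fun W x => by rw [hU, opConv_apply]⟩

/-- For every `n` there exists a unitary operator `U_n^{(d)}` on `ℓ²(ℤ^d; ℋ)` with
`(U_n^{(d)} W)(x) = ∑_{ε ∈ Λ^d} C_n^{(ε)} W(x - ε)`. -/
theorem stmt18 (a : ℕ → ℋ →L[ℂ] ℋ) (ha : QBN a)
    (d : ℕ) (hd : 2 ≤ d)
    (Hd : Type) [NormedAddCommGroup Hd] [InnerProductSpace ℂ Hd] [CompleteSpace Hd]
    (tpv : MultilinearMap ℂ (fun _ : Fin d => ℋ) Hd)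
    (tp : (Fin d → ℋ →L[ℂ] ℋ) → (Hd →L[ℂ] Hd))
    (htp : IsTensorD tpv tp)
    (K : Hd ≃ₗᵢ[ℂ] ℋ) (n : ℕ) :
    ∃ U : l2ZH d ≃ₗᵢ[ℂ] l2ZH d, ∀ (W : l2ZH d) (x : Fin d → ℤ),
      (U W) x = ∑ v ∈ LamD d, Cop a tp K n v (W (x - v)) :=
  stmt18_general a ha d Hd tpv tp htp K n
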